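/- For all integers n ≥ 1 and d ≥ 1, b(d)·∑_{k=0}^{n−1} n!/k! = ∑_{k=0}^{n−1} k^d·(n!/k!) + ∑_{j=1}^{d} B_{d,j}·n^j. -/

import Mathlib

/-!
Write `T_d = ∑_{k<n} k^d n!/k!` and `P_d(x) = ∑_{j=1}^{d} B_{d,j} x^j`, so that the claim reads
`b(d) T_0 = T_d + P_d(n)`. The binomial theorem and the shift `k ↦ k + 1`, which turns
`(k+1)^d n!/k!` into `(k+1)^{d+1} n!/(k+1)!`, give `∑_{j ≤ d} C(d,j) T_j = T_{d+1} + n^{d+1}`,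
while the recursion for `B` gives `∑_{j ≤ d} C(d,j) P_j = P_{d+1} - x^{d+1}`. Adding the two,
`T_d + P_d(n)` satisfies the Bell recursion, and it equals `T_0` at `d = 0`.
-/

/-- The Bell numbers: `bell 0 = 1` and `bell (d+1) = ∑_{j=0}^{d} C(d,j) * bell j`. -/
def bell : ℕ → ℕ
  | 0 => 1
  | d + 1 => ∑ j ∈ (Finset.range (d + 1)).attach, Nat.choose d j.1 * bell j.1
  decreasing_by exact Finset.mem_range.mp j.2

/-- The doubly-indexed integers `B d j`: `B d j = 0` for `d < j`, `B j j = 1`, and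
`B (d+1) j = ∑_{k=j}^{d} C(d,k) * B k j` for `d ≥ j`. -/
def Bmat : ℕ → ℕ → ℕ
  | 0, j => if 0 = j then 1 else 0
  | d + 1, j =>
    if d + 1 < j then 0
    else if d + 1 = j then 1
    else ∑ k ∈ (Finset.Icc j d).attach, Nat.choose d k.1 * Bmat k.1 j
  decreasing_by
    have := (Finset.mem_Icc.mp k.2).2; omega

open Finset Nat

theorem bell_succ_eq_sum (d : ℕ) :
    bell (d + 1) = ∑ k ∈ range (d + 1), d.choose k * bell k := by
  rw [bell, sum_attach (range (d + 1)) fun k => d.choose k * bell k]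

theorem Bmat_self (d : ℕ) : Bmat d d = 1 := by
  cases d <;> simp [Bmat]

theorem Bmat_succ_of_le {d j : ℕ} (h : j ≤ d) :
    Bmat (d + 1) j = ∑ k ∈ Icc j d, d.choose k * Bmat k j := by
  rw [Bmat, if_neg (by omega), if_neg (by omega),
    sum_attach (Icc j d) fun k => d.choose k * Bmat k j]

section BmatPoly

variable {R : Type*} [CommSemiring R]

def bmatPoly (d : ℕ) (x : R) : R := ∑ j ∈ Icc 1 d, (Bmat d j : R) * x ^ j

@[simp]
theorem bmatPoly_zero (x : R) : bmatPoly 0 x = 0 := by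
  simp [bmatPoly]

theorem bmatPoly_succ (d : ℕ) (x : R) :
    bmatPoly (d + 1) x =
      ∑ k ∈ range (d + 1), (d.choose k : R) * bmatPoly k x + x ^ (d + 1) := by
  have hswap : ∑ k ∈ range (d + 1), (d.choose k : R) * bmatPoly k x
      = ∑ j ∈ Icc 1 d, ∑ k ∈ Icc j d, (d.choose k : R) * Bmat k j * x ^ j := by
    rw [← sum_comm' (s := range (d + 1)) (t := fun k => Icc 1 k) (t' := Icc 1 d)
      (s' := fun j => Icc j d)
      (by intro k j; simp only [mem_Icc, mem_range]; omega)]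
    simp only [bmatPoly, mul_sum, mul_assoc]
  rw [hswap, bmatPoly, sum_Icc_succ_top (by omega), Bmat_self, Nat.cast_one, one_mul]
  congr 1
  refine sum_congr rfl fun j hj => ?_
  rw [Bmat_succ_of_le (mem_Icc.mp hj).2]
  push_cast
  rw [sum_mul]

end BmatPoly

section FactorialMoment

variable {K : Type*} [Field K] [CharZero K]

variable (K) in
def factorialMoment (d n : ℕ) : K := ∑ k ∈ range n, (k : K) ^ d * ((n ! : K) / (k ! : K))

theorem succ_mul_div_factorial_succ (a : K) (k : ℕ) :
    ((k : K) + 1) * (a / ((k + 1)! : K)) = a / (k ! : K) := by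
  rw [factorial_succ, Nat.cast_mul, Nat.cast_succ]
  field_simp

theorem sum_choose_mul_factorialMoment (d n : ℕ) :
    ∑ j ∈ range (d + 1), (d.choose j : K) * factorialMoment K j n
      = factorialMoment K (d + 1) n + (n : K) ^ (d + 1) := by
  calc ∑ j ∈ range (d + 1), (d.choose j : K) * factorialMoment K j n
      = ∑ k ∈ range n, ((k : K) + 1) ^ d * ((n ! : K) / (k ! : K)) := by
        simp only [factorialMoment, mul_sum, add_pow, one_pow, mul_one, sum_mul]
        rw [sum_comm]
        exact sum_congr rfl fun k _ => sum_congr rfl fun j _ => by ring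
    _ = ∑ k ∈ range n, ((k + 1 : ℕ) : K) ^ (d + 1) * ((n ! : K) / ((k + 1)! : K)) := by
        refine sum_congr rfl fun k _ => ?_
        rw [Nat.cast_succ, pow_succ, mul_assoc, succ_mul_div_factorial_succ]
    _ = ∑ k ∈ range (n + 1), (k : K) ^ (d + 1) * ((n ! : K) / (k ! : K)) := by
        rw [sum_range_succ']
        simp
    _ = factorialMoment K (d + 1) n + (n : K) ^ (d + 1) := by
        rw [sum_range_succ, div_self (Nat.cast_ne_zero.mpr (factorial_ne_zero n)), mul_one]
        rfl

theorem bell_mul_factorialMoment_zero (d n : ℕ) :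
    (bell d : K) * factorialMoment K 0 n = factorialMoment K d n + bmatPoly d (n : K) := by
  induction d using Nat.strong_induction_on with
  | _ d ih =>
    rcases d with _ | d
    · simp [bell]
    have hchoose : ∀ k ∈ range (d + 1), (d.choose k : K) * bell k * factorialMoment K 0 n
        = (d.choose k : K) * factorialMoment K k n + (d.choose k : K) * bmatPoly k (n : K) := by
      intro k hk
      rw [mul_assoc, ih k (mem_range.mp hk), mul_add]
    rw [bell_succ_eq_sum, Nat.cast_sum, sum_mul]
    simp only [Nat.cast_mul]
    rw [sum_congr rfl hchoose, sum_add_distrib, sum_choose_mul_factorialMoment, bmatPoly_succ]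
    ring

end FactorialMoment

theorem stmt_16 (n : ℕ) (d : ℕ) :
    (bell d : ℚ) * ∑ k ∈ Finset.range n, ((Nat.factorial n : ℚ) / (Nat.factorial k : ℚ)) =
      (∑ k ∈ Finset.range n, (k : ℚ) ^ d * ((Nat.factorial n : ℚ) / (Nat.factorial k : ℚ))) +
        ∑ j ∈ Finset.Icc 1 d, (Bmat d j : ℚ) * (n : ℚ) ^ j := by
  simpa [factorialMoment, bmatPoly] using bell_mul_factorialMoment_zero (K := ℚ) d n
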